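/- Let n, k, m ∈ ℕ, let g₀ = 1 (with d₀ = 0) and g₁,…,g_m be real polynomials in n variables of degrees at most 2d₁,…,2d_m with dᵢ ≤ k, and let S(g) = { x ∈ ℝ^n : gᵢ(x) ≥ 0 for i = 1,…,m }. Let μ be a positive measure supported on S(g) whose monomial moments up to degree 2k are finite, let f be a real polynomial of degree at most 2k, let λ̲, λ ∈ ℝ with λ̲ ≤ λ, and let G₀,…,G_m be positive semidefinite real symmetric matrices, Gᵢ indexed by ℕ^n_{k−dᵢ}, such that f(x) − λ = Σ_{i=0}^m gᵢ(x) · v_{k−dᵢ}(x)ᵀ Gᵢ v_{k−dᵢ}(x) for all x ∈ ℝ^n, where v_t(x) = (x^α)_{α∈ℕ^n_t}. Let D_k(gμ) be the block-diagonal matrix with blocks M_{k−dᵢ}(gᵢμ), i = 0,…,m. If λ_min(D_k(gμ)) > 0 and ∫(f − λ̲) dμ ≤ λ_min(D_k(gμ)), then Σ_{i=0}^m tr(Gᵢ) ≤ 1. -/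

import Mathlib

open Matrix BigOperators MeasureTheory

/-- The set `ℕ^n_k` of multi-indices `α ∈ ℕ^n` with `|α| = α₁ + ⋯ + αₙ ≤ k`. -/
abbrev MIdx (n k : ℕ) : Type := {α : Fin n → ℕ // ∑ i, α i ≤ k}

noncomputable instance (n k : ℕ) : Fintype (MIdx n k) :=
  Fintype.ofInjective
    (fun a : MIdx n k => fun i : Fin n =>
      (⟨a.1 i, Nat.lt_succ_of_le
        ((Finset.single_le_sum (fun j _ => Nat.zero_le (a.1 j)) (Finset.mem_univ i)).trans
          a.2)⟩ : Fin (k + 1)))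
    (fun a b h => Subtype.ext (funext fun i => congrArg Fin.val (congrFun h i)))

/-- The smallest eigenvalue of a real symmetric matrix, expressed as the infimum of the
Rayleigh quotient over the unit sphere (Courant–Fischer). -/
noncomputable def eigMin {m : Type} [Fintype m] (A : Matrix m m ℝ) : ℝ :=
  ⨅ v : {v : m → ℝ // v ⬝ᵥ v = 1}, v.1 ⬝ᵥ A.mulVec v.1

/-- Evaluation of the polynomial `gᵢ` (given by its coefficients `gc i`, supported on
degrees `≤ 2·dᵢ`) at a point `x ∈ ℝ^n`. -/
noncomputable def geval (n : ℕ) {m : ℕ} (d : Fin (m + 1) → ℕ)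
    (gc : Fin (m + 1) → (Fin n → ℕ) → ℝ) (i : Fin (m + 1)) (x : Fin n → ℝ) : ℝ :=
  ∑ ζ : MIdx n (2 * d i), gc i ζ.1 * ∏ j, x j ^ ζ.1 j

/-- The block-diagonal moment/localizing matrix `D_k(gμ)` with blocks
`M_{k−dᵢ}(gᵢμ)`, `i = 0,…,m`: entry at `((i,α),(i,β))` is `∫ gᵢ(x)·x^{α+β} dμ`. -/
noncomputable def DkMat (n k m : ℕ) (d : Fin (m + 1) → ℕ)
    (gc : Fin (m + 1) → (Fin n → ℕ) → ℝ) (μ : Measure (Fin n → ℝ)) :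
    Matrix ((i : Fin (m + 1)) × MIdx n (k - d i))
      ((i : Fin (m + 1)) × MIdx n (k - d i)) ℝ :=
  Matrix.of fun p q =>
    if p.1 = q.1 then
      ∫ x, geval n d gc p.1 x * ∏ j, x j ^ (p.2.1 j + q.2.1 j) ∂μ
    else 0

/-!
Integrating the certificate `f − λ = Σᵢ gᵢ · vᵀ Gᵢ v` against `μ` turns the `i`-th term into
`tr (Gᵢ Mᵢ)`, where `Mᵢ = M_{k−dᵢ}(gᵢμ)` is the `i`-th diagonal block of `D_k(gμ)`. A principal
block of `D_k(gμ)` dominates `λ_min(D_k(gμ)) · I`, and `Gᵢ ⪰ 0`, so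
`tr (Gᵢ Mᵢ) ≥ λ_min · tr Gᵢ`. Hence `λ_min · Σᵢ tr Gᵢ ≤ ∫ (f − λ) dμ ≤ ∫ (f − λ̲) dμ ≤ λ_min`.
-/

section EigMin

variable {ι : Type} [Fintype ι]

lemma abs_dotProduct_mulVec_le_of_dotProduct_self_eq_one (A : Matrix ι ι ℝ) {u : ι → ℝ}
    (hu : u ⬝ᵥ u = 1) : |u ⬝ᵥ A *ᵥ u| ≤ ∑ i, ∑ j, |A i j| := by
  have hu1 : ∀ i, |u i| ≤ 1 := fun i => by
    rw [← sq_le_one_iff_abs_le_one, sq, ← hu]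
    exact Finset.single_le_sum (fun j _ => mul_self_nonneg (u j)) (Finset.mem_univ i)
  calc |u ⬝ᵥ A *ᵥ u| = |∑ i, ∑ j, u i * A i j * u j| := by
        simp only [dotProduct, mulVec, Finset.mul_sum, mul_assoc]
    _ ≤ ∑ i, ∑ j, |u i * A i j * u j| :=
        (Finset.abs_sum_le_sum_abs _ _).trans
          (Finset.sum_le_sum fun i _ => Finset.abs_sum_le_sum_abs _ _)
    _ ≤ ∑ i, ∑ j, |A i j| := by
        refine Finset.sum_le_sum fun i _ => Finset.sum_le_sum fun j _ => ?_
        rw [abs_mul, abs_mul, mul_comm |u i|, mul_assoc]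
        exact mul_le_of_le_one_right (abs_nonneg _)
          (mul_le_one₀ (hu1 i) (abs_nonneg _) (hu1 j))

lemma bddBelow_rayleigh (A : Matrix ι ι ℝ) :
    BddBelow (Set.range fun v : {v : ι → ℝ // v ⬝ᵥ v = 1} => v.1 ⬝ᵥ A *ᵥ v.1) := by
  refine ⟨-∑ i, ∑ j, |A i j|, ?_⟩
  rintro _ ⟨⟨u, hu⟩, rfl⟩
  exact neg_le_of_abs_le (abs_dotProduct_mulVec_le_of_dotProduct_self_eq_one A hu)

lemma eigMin_mul_dotProduct_self_le (A : Matrix ι ι ℝ) (w : ι → ℝ) :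
    eigMin A * (w ⬝ᵥ w) ≤ w ⬝ᵥ A *ᵥ w := by
  rcases eq_or_ne w 0 with rfl | hw
  · simp
  have hww : 0 < w ⬝ᵥ w :=
    lt_of_le_of_ne (Finset.sum_nonneg fun i _ => mul_self_nonneg (w i))
      (Ne.symm (mt dotProduct_self_eq_zero.mp hw))
  set r := Real.sqrt (w ⬝ᵥ w)
  have hr : 0 < r := Real.sqrt_pos.mpr hww
  have hrr : r * r = w ⬝ᵥ w := Real.mul_self_sqrt hww.le
  have hu : (r⁻¹ • w) ⬝ᵥ (r⁻¹ • w) = 1 := by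
    rw [smul_dotProduct, dotProduct_smul, smul_eq_mul, smul_eq_mul, ← hrr]
    field_simp
  have h : eigMin A ≤ (r⁻¹ • w) ⬝ᵥ A *ᵥ (r⁻¹ • w) := ciInf_le (bddBelow_rayleigh A) ⟨_, hu⟩
  rw [smul_dotProduct, mulVec_smul, dotProduct_smul, smul_eq_mul, smul_eq_mul] at h
  calc eigMin A * (w ⬝ᵥ w) ≤ r⁻¹ * (r⁻¹ * (w ⬝ᵥ A *ᵥ w)) * (r * r) := by
        rw [hrr]; gcongr
    _ = w ⬝ᵥ A *ᵥ w := by field_simp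

lemma posSemidef_sub_eigMin_smul_one [DecidableEq ι] {A : Matrix ι ι ℝ} (hA : A.IsHermitian) :
    (A - eigMin A • (1 : Matrix ι ι ℝ)).PosSemidef := by
  refine .of_dotProduct_mulVec_nonneg (hA.sub (isHermitian_one.smul (IsSelfAdjoint.all _)))
    fun w => ?_
  simp only [star_trivial, sub_mulVec, smul_mulVec, one_mulVec, dotProduct_sub,
    dotProduct_smul, smul_eq_mul, sub_nonneg]
  exact eigMin_mul_dotProduct_self_le A w

end EigMin

lemma Matrix.PosSemidef.trace_mul_nonneg {ι : Type*} [Fintype ι] [DecidableEq ι]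
    {G N : Matrix ι ι ℝ} (hG : G.PosSemidef) (hN : N.PosSemidef) : 0 ≤ (G * N).trace := by
  open scoped MatrixOrder in
  obtain ⟨B, rfl⟩ := CStarAlgebra.nonneg_iff_eq_star_mul_self.mp hG.nonneg
  rw [Matrix.mul_assoc, trace_mul_comm, star_eq_conjTranspose]
  exact (hN.mul_mul_conjTranspose_same B).trace_nonneg

lemma Matrix.PosSemidef.mul_trace_le_trace_mul {ι : Type*} [Fintype ι] [DecidableEq ι]
    {G M : Matrix ι ι ℝ} {c : ℝ} (hG : G.PosSemidef) (hM : (M - c • 1).PosSemidef) :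
    c * G.trace ≤ (G * M).trace := by
  have h := hG.trace_mul_nonneg hM
  rwa [Matrix.mul_sub, trace_sub, Matrix.mul_smul, Matrix.mul_one, trace_smul, smul_eq_mul,
    sub_nonneg] at h

section QuadraticForm

variable {X κ : Type*} [MeasurableSpace X] [Fintype κ] {μ : Measure X}

lemma mul_dotProduct_mulVec_eq_sum (g : ℝ) (v : κ → ℝ) (G : Matrix κ κ ℝ) :
    g * (v ⬝ᵥ G *ᵥ v) = ∑ α, ∑ β, G α β * (g * (v β * v α)) := by
  simp only [dotProduct, mulVec, Finset.mul_sum]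
  exact Finset.sum_congr rfl fun α _ => Finset.sum_congr rfl fun β _ => by ring

lemma integrable_mul_dotProduct_mulVec {g : X → ℝ} {v : X → κ → ℝ} (G : Matrix κ κ ℝ)
    (hint : ∀ α β, Integrable (fun x => g x * (v x α * v x β)) μ) :
    Integrable (fun x => g x * (v x ⬝ᵥ G *ᵥ v x)) μ := by
  simp only [mul_dotProduct_mulVec_eq_sum]
  exact integrable_finsetSum _ fun α _ => integrable_finsetSum _ fun β _ =>
    (hint β α).const_mul _

lemma integral_mul_dotProduct_mulVec {g : X → ℝ} {v : X → κ → ℝ} (G : Matrix κ κ ℝ)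
    (hint : ∀ α β, Integrable (fun x => g x * (v x α * v x β)) μ) :
    ∫ x, g x * (v x ⬝ᵥ G *ᵥ v x) ∂μ =
      (G * of fun α β => ∫ x, g x * (v x α * v x β) ∂μ).trace := by
  simp only [mul_dotProduct_mulVec_eq_sum, trace, diag_apply, mul_apply, of_apply]
  refine (integral_finsetSum _ fun α _ => integrable_finsetSum _ fun β _ =>
    (hint β α).const_mul _).trans (Finset.sum_congr rfl fun α _ => ?_)
  refine (integral_finsetSum _ fun β _ => (hint β α).const_mul _).trans ?_
  exact Finset.sum_congr rfl fun β _ => integral_const_mul _ _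

end QuadraticForm

def monomialVec (n t : ℕ) (x : Fin n → ℝ) : MIdx n t → ℝ := fun α => ∏ j, x j ^ α.1 j

noncomputable def localizingMatrix (n t : ℕ) (g : (Fin n → ℝ) → ℝ) (μ : Measure (Fin n → ℝ)) :
    Matrix (MIdx n t) (MIdx n t) ℝ :=
  of fun α β => ∫ x, g x * ∏ j, x j ^ (α.1 j + β.1 j) ∂μ

lemma prod_pow_add {n : ℕ} (x : Fin n → ℝ) (α β : Fin n → ℕ) :
    ∏ j, x j ^ (α j + β j) = (∏ j, x j ^ α j) * ∏ j, x j ^ β j := by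
  simp only [pow_add, Finset.prod_mul_distrib]

lemma localizingMatrix_eq_of (n t : ℕ) (g : (Fin n → ℝ) → ℝ) (μ : Measure (Fin n → ℝ)) :
    localizingMatrix n t g μ =
      of fun α β => ∫ x, g x * (monomialVec n t x α * monomialVec n t x β) ∂μ := by
  simp only [localizingMatrix, monomialVec, prod_pow_add]

section Moments

variable {n k m : ℕ} {d : Fin (m + 1) → ℕ} {gc : Fin (m + 1) → (Fin n → ℕ) → ℝ}
  {μ : Measure (Fin n → ℝ)}

lemma DkMat_isHermitian : (DkMat n k m d gc μ).IsHermitian := by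
  ext ⟨i, α⟩ ⟨j, β⟩
  by_cases hij : i = j
  · subst hij
    simp only [conjTranspose_apply, star_trivial, DkMat, of_apply, if_true, add_comm]
  · simp [DkMat, hij, Ne.symm hij]

lemma DkMat_submatrix_sigmaMk (i : Fin (m + 1)) :
    (DkMat n k m d gc μ).submatrix (Sigma.mk i) (Sigma.mk i) =
      localizingMatrix n (k - d i) (geval n d gc i) μ := by
  ext α β
  simp [DkMat, localizingMatrix]

lemma integrable_geval_mul_monomialVec_mul
    (hmom : ∀ γ : Fin n → ℕ, ∑ j, γ j ≤ 2 * k → Integrable (fun x => ∏ j, x j ^ γ j) μ)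
    {i : Fin (m + 1)} (hdk : d i ≤ k) (α β : MIdx n (k - d i)) :
    Integrable (fun x => geval n d gc i x *
      (monomialVec n (k - d i) x α * monomialVec n (k - d i) x β)) μ := by
  simp only [geval, monomialVec, Finset.sum_mul, mul_assoc, ← prod_pow_add]
  refine integrable_finsetSum _ fun ζ _ => (hmom _ ?_).const_mul _
  have := ζ.2; have := α.2; have := β.2
  simp only [Finset.sum_add_distrib]
  omega

end Moments

theorem stmt10_general (n k m : ℕ) (d : Fin (m + 1) → ℕ) (hdk : ∀ i, d i ≤ k)
    (gc : Fin (m + 1) → (Fin n → ℕ) → ℝ)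
    (μ : Measure (Fin n → ℝ))
    (hmom : ∀ γ : Fin n → ℕ, (∑ i, γ i) ≤ 2 * k →
      Integrable (fun x => ∏ i, x i ^ γ i) μ)
    (f : MIdx n (2 * k) → ℝ) (lamL lam : ℝ) (hll : lamL ≤ lam)
    (G : (i : Fin (m + 1)) → Matrix (MIdx n (k - d i)) (MIdx n (k - d i)) ℝ)
    (hG : ∀ i, (G i).PosSemidef)
    (hrep : ∀ x : Fin n → ℝ,
      (∑ γ : MIdx n (2 * k), f γ * ∏ i, x i ^ γ.1 i) - lam
        = ∑ i : Fin (m + 1), geval n d gc i x *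
            ((fun α : MIdx n (k - d i) => ∏ j, x j ^ α.1 j) ⬝ᵥ
              (G i).mulVec (fun α : MIdx n (k - d i) => ∏ j, x j ^ α.1 j)))
    (hpos : 0 < eigMin (DkMat n k m d gc μ))
    (hint : (∫ x, ((∑ γ : MIdx n (2 * k), f γ * ∏ i, x i ^ γ.1 i) - lamL) ∂μ)
      ≤ eigMin (DkMat n k m d gc μ)) :
    ∑ i : Fin (m + 1), (G i).trace ≤ 1 := by
  classical
  set c := eigMin (DkMat n k m d gc μ)
  set L := fun i => localizingMatrix n (k - d i) (geval n d gc i) μ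
  set F := fun x : Fin n → ℝ => ∑ γ : MIdx n (2 * k), f γ * ∏ i, x i ^ γ.1 i
  have hLint := fun i => integrable_geval_mul_monomialVec_mul (gc := gc) hmom (hdk i)
  have hblock (i) : c * (G i).trace ≤ (G i * L i).trace := by
    refine (hG i).mul_trace_le_trace_mul ?_
    simpa [submatrix_sub, submatrix_smul, submatrix_one _ sigma_mk_injective,
      DkMat_submatrix_sigmaMk] using
      (posSemidef_sub_eigMin_smul_one DkMat_isHermitian).submatrix (Sigma.mk i)
  have hsos : ∫ x, (F x - lam) ∂μ = ∑ i, (G i * L i).trace := by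
    simp only [F, hrep]
    refine (integral_finsetSum _ fun i _ =>
      integrable_mul_dotProduct_mulVec _ (hLint i)).trans ?_
    exact Finset.sum_congr rfl fun i _ => by
      rw [integral_mul_dotProduct_mulVec _ (hLint i), ← localizingMatrix_eq_of]
  have hconst (a : ℝ) : Integrable (fun _ => a) μ := by
    simpa using (hmom 0 (by simp)).const_mul a
  have hF : Integrable F μ := integrable_finsetSum _ fun γ _ => (hmom γ.1 γ.2).const_mul _
  have hlam : ∫ x, (F x - lam) ∂μ ≤ ∫ x, (F x - lamL) ∂μ :=
    integral_mono (hF.sub (hconst lam)) (hF.sub (hconst lamL)) fun x => by dsimp; linarith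
  refine le_of_mul_le_mul_left ?_ hpos
  calc c * ∑ i, (G i).trace ≤ ∑ i, (G i * L i).trace := by
        rw [Finset.mul_sum]; exact Finset.sum_le_sum fun i _ => hblock i
    _ = ∫ x, (F x - lam) ∂μ := hsos.symm
    _ ≤ ∫ x, (F x - lamL) ∂μ := hlam
    _ ≤ c * 1 := by rw [mul_one]; exact hint

/-- If `f − λ = Σᵢ gᵢ · v_{k−dᵢ}ᵀ Gᵢ v_{k−dᵢ}` with each `Gᵢ ⪰ 0`,
`λ̲ ≤ λ`, `μ` supported on `S(g)`, `λ_min(D_k(gμ)) > 0` and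
`∫ (f − λ̲) dμ ≤ λ_min(D_k(gμ))`, then `Σᵢ tr(Gᵢ) ≤ 1`. -/
theorem stmt10 (n k m : ℕ) (d : Fin (m + 1) → ℕ) (hd0 : d 0 = 0) (hdk : ∀ i, d i ≤ k)
    (gc : Fin (m + 1) → (Fin n → ℕ) → ℝ)
    (hg0 : gc 0 = fun ζ => if ζ = 0 then 1 else 0)
    (hsupp : ∀ (i : Fin (m + 1)) (ζ : Fin n → ℕ), ¬ (∑ j, ζ j ≤ 2 * d i) → gc i ζ = 0)
    (μ : Measure (Fin n → ℝ))
    (hμsupp : ∀ᵐ x ∂μ, ∀ i : Fin (m + 1), 0 ≤ geval n d gc i x)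
    (hmom : ∀ γ : Fin n → ℕ, (∑ i, γ i) ≤ 2 * k →
      Integrable (fun x => ∏ i, x i ^ γ i) μ)
    (f : MIdx n (2 * k) → ℝ) (lamL lam : ℝ) (hll : lamL ≤ lam)
    (G : (i : Fin (m + 1)) → Matrix (MIdx n (k - d i)) (MIdx n (k - d i)) ℝ)
    (hG : ∀ i, (G i).PosSemidef)
    (hrep : ∀ x : Fin n → ℝ,
      (∑ γ : MIdx n (2 * k), f γ * ∏ i, x i ^ γ.1 i) - lam
        = ∑ i : Fin (m + 1), geval n d gc i x *
            ((fun α : MIdx n (k - d i) => ∏ j, x j ^ α.1 j) ⬝ᵥ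
              (G i).mulVec (fun α : MIdx n (k - d i) => ∏ j, x j ^ α.1 j)))
    (hpos : 0 < eigMin (DkMat n k m d gc μ))
    (hint : (∫ x, ((∑ γ : MIdx n (2 * k), f γ * ∏ i, x i ^ γ.1 i) - lamL) ∂μ)
      ≤ eigMin (DkMat n k m d gc μ)) :
    ∑ i : Fin (m + 1), (G i).trace ≤ 1 :=
  stmt10_general n k m d hdk gc μ hmom f lamL lam hll G hG hrep hpos hint
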